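/- arXiv:2311.09351 — 3 statements merged into one kernel-verified Lean document; each statement's English description precedes it below -/
import Mathlib

section
/- Let A and B be finite alphabets and C ∈ (0,1). Consider substitution maps ρ: A → B^* and ρ': A → B^* such that for every a ∈ A the word ρ'(a) is a substring of ρ(a) (i.e. obtained from ρ(a) by deleting letters, keeping the order) and (1 − C)|ρ(a)| < |ρ'(a)|. Then for every Bernoulli measure p on A^ℤ, f̄(κ(A,ρ,p), κ(A,ρ',p)) < C. -/
open MeasureTheory Filter Set
open scoped ENNReal NNReal Topology

noncomputable section

namespace LBPaper

/-! ### Words, edit distance, Feldman f̄-distances -/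

/-- Length of a longest common substring (order-preserving subsequence) of two `n`-words. -/
def lcs {α : Type*} (n : ℕ) (a b : Fin n → α) : ℕ :=
  sSup {k : ℕ | ∃ i : Fin k → Fin n, ∃ j : Fin k → Fin n,
    StrictMono i ∧ StrictMono j ∧ ∀ s, a (i s) = b (j s)}

/-- The edit (f̄) distance between two `n`-words: `1 - k/n` where `k` is the length of a
longest common substring. -/
def editDist {α : Type*} (n : ℕ) (a b : Fin n → α) : ℝ :=
  1 - (lcs n a b : ℝ) / (n : ℝ)

/-- The left shift on the two-sided sequence space. -/
def shift (α : Type*) : (ℤ → α) → (ℤ → α) := fun x n => x (n + 1)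

/-- The left shift on the one-sided sequence space. -/
def shiftP (α : Type*) : (ℕ → α) → (ℕ → α) := fun x n => x (n + 1)

/-- The word given by the coordinates `0,…,n-1` of a two-sided sequence. -/
def word {α : Type*} (n : ℕ) (x : ℤ → α) : Fin n → α := fun i => x ((i : ℕ) : ℤ)

/-- The word given by the coordinates `0,…,n-1` of a one-sided sequence. -/
def wordP {α : Type*} (n : ℕ) (x : ℕ → α) : Fin n → α := fun i => x (i : ℕ)

variable {α : Type*} [MeasurableSpace α]

/-- `f̄_n` between two measures on the two-sided shift space: the infimum over all `n`-joinings
of the integral of the edit distance. -/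
def fbarN (n : ℕ) (ν ν' : Measure (ℤ → α)) : ℝ :=
  sInf {r : ℝ | ∃ m : Measure ((Fin n → α) × (Fin n → α)),
    IsProbabilityMeasure m ∧
    m.map Prod.fst = ν.map (word n) ∧
    m.map Prod.snd = ν'.map (word n) ∧
    r = ∫ q, editDist n q.1 q.2 ∂m}

/-- The `f̄`-distance between two measures on the two-sided shift space. -/
def fbar (ν ν' : Measure (ℤ → α)) : ℝ :=
  sInf {ε : ℝ | 0 < ε ∧ ∃ᶠ n in atTop, fbarN n ν ν' ≤ ε}

/-- `f̄_n` between two measures on the one-sided shift space. -/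
def fbarNP (n : ℕ) (ν ν' : Measure (ℕ → α)) : ℝ :=
  sInf {r : ℝ | ∃ m : Measure ((Fin n → α) × (Fin n → α)),
    IsProbabilityMeasure m ∧
    m.map Prod.fst = ν.map (wordP n) ∧
    m.map Prod.snd = ν'.map (wordP n) ∧
    r = ∫ q, editDist n q.1 q.2 ∂m}

/-- The `f̄`-distance between two measures on the one-sided shift space. -/
def fbarP (ν ν' : Measure (ℕ → α)) : ℝ :=
  sInf {ε : ℝ | 0 < ε ∧ ∃ᶠ n in atTop, fbarNP n ν ν' ≤ ε}

/-! ### Kolmogorov–Sinai entropy -/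

/-- Shannon entropy of a finite family of sets with respect to a measure. -/
def partEnt {X : Type*} [MeasurableSpace X] {ι : Type*} [Fintype ι]
    (μ : Measure X) (P : ι → Set X) : ℝ :=
  ∑ i, Real.negMulLog ((μ (P i)).toReal)

/-- The atom of the refinement `⋁_{j<n} T^{-j} P` indexed by the word `s`. -/
def refinedAtom {X ι : Type*} (T : X → X) (P : ι → Set X) (n : ℕ) (s : Fin n → ι) : Set X :=
  ⋂ j : Fin n, (T^[(j : ℕ)]) ⁻¹' P (s j)

/-- `P` is a finite measurable partition of `X`. -/
def IsFinPartition {X : Type*} [MeasurableSpace X] {ι : Type*} (P : ι → Set X) : Prop :=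
  (∀ i, MeasurableSet (P i)) ∧ (Pairwise fun i j => Disjoint (P i) (P j)) ∧
    (⋃ i, P i) = Set.univ

/-- The entropy of `T` with respect to a finite partition `P`
(the limit `lim (1/n) H(⋁_{j<n} T^{-j}P)` equals this infimum). -/
def entPart {X : Type*} [MeasurableSpace X] {ι : Type*} [Fintype ι]
    (T : X → X) (μ : Measure X) (P : ι → Set X) : ℝ :=
  ⨅ n : ℕ, (((n : ℝ) + 1)⁻¹) * partEnt μ (fun s : Fin (n + 1) → ι => refinedAtom T P (n + 1) s)

/-- The Kolmogorov–Sinai (measure-theoretic) entropy of `(T, μ)`: the supremum of the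
entropies with respect to all finite measurable partitions. -/
def ksEntropy {X : Type*} [MeasurableSpace X] (T : X → X) (μ : Measure X) : ℝ :=
  ⨆ (k : ℕ), ⨆ (P : Fin k → Set X), ⨆ (_ : IsFinPartition P), entPart T μ P

/-! ### Loosely Bernoulli -/

/-- `(X, S, μ)` is loosely Bernoulli: every finite measurable partition `P` is LB, i.e. for
every `ε > 0` there are `n` and a collection `G` of atoms of `⋁_{j<n} S^{-j}P` of total
measure `> 1 - ε` that are pairwise `ε`-close in the edit distance (atoms identified with
`n`-words over the index alphabet of `P`). -/
def IsLB {X : Type*} [MeasurableSpace X] (S : X → X) (μ : Measure X) : Prop :=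
  ∀ (k : ℕ) (P : Fin k → Set X), IsFinPartition P →
    ∀ ε : ℝ, 0 < ε → ∃ n : ℕ, 0 < n ∧ ∃ G : Finset (Fin n → Fin k),
      (1 - ε : ℝ) < (μ (⋃ s ∈ G, refinedAtom S P n s)).toReal ∧
      ∀ s ∈ G, ∀ t ∈ G, editDist n s t < ε

/-! ### Bernoulli measures -/

/-- `p` is a probability vector on the finite alphabet `α`. -/
def IsProbVector {α : Type*} [Fintype α] (p : α → ℝ) : Prop :=
  (∀ a, 0 ≤ p a) ∧ ∑ a, p a = 1

/-- `ν` is the Bernoulli (i.i.d. product) measure on `α^ℤ` with marginal probability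
vector `p`. -/
def IsBernoulli {α : Type*} [MeasurableSpace α] (p : α → ℝ) (ν : Measure (ℤ → α)) : Prop :=
  IsProbabilityMeasure ν ∧
    ∀ (s : Finset ℤ) (f : ℤ → α),
      (ν {x : ℤ → α | ∀ i ∈ s, x i = f i}).toReal = ∏ i ∈ s, p (f i)

end LBPaper

namespace LBPaper

/-! ### Substitution maps and Bernoulli-coded measures -/

variable {α β : Type*}

/-- Cumulative lengths of the words substituted for the letters of `x`:
`cumLen ρ x n` is the position in the image sequence at which the word `ρ (x n)` starts. -/
def cumLen (ρ : α → List β) (x : ℤ → α) : ℤ → ℤ := fun n =>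
  if 0 ≤ n then ((∑ i ∈ Finset.range n.toNat, ((ρ (x (i : ℕ))).length : ℤ)) : ℤ)
  else -((∑ i ∈ Finset.range (-n).toNat, ((ρ (x (-((i : ℕ) + 1)))).length : ℤ)) : ℤ)

/-- The index of the block of the substituted sequence containing position `j`. -/
def blockIdx (ρ : α → List β) (x : ℤ → α) (j : ℤ) : ℤ :=
  sSup {n : ℤ | cumLen ρ x n ≤ j}

/-- The extension `ρ̲ : α^ℤ → β^ℤ` of a substitution map by concatenation, with the word
`ρ (x 0)` starting at coordinate `0`. -/
def subst [Nonempty β] (ρ : α → List β) (x : ℤ → α) : ℤ → β := fun j =>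
  (ρ (x (blockIdx ρ x j))).getD (j - cumLen ρ x (blockIdx ρ x j)).toNat
    (Classical.arbitrary β)

/-- The cylinder `[a] = {x : a_0 = a}`. -/
def cyl0 (a : α) : Set (ℤ → α) := {x : ℤ → α | x 0 = a}

/-- The Bernoulli-coded measure `κ(α, ρ, ν) = ρ̲_* ν` on `β^ℤ`. -/
def kappa [Nonempty β] [MeasurableSpace α] [MeasurableSpace β]
    (ρ : α → List β) (ν : Measure (ℤ → α)) : Measure (ℤ → β) :=
  ν.map (subst ρ)

/-- The shift-invariant version `κ_inv(α, ρ, ν)` of the Bernoulli-coded measure. -/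
def kappaInv [Fintype α] [Nonempty β] [MeasurableSpace α] [MeasurableSpace β]
    (ρ : α → List β) (ν : Measure (ℤ → α)) : Measure (ℤ → β) :=
  ∑ a : α, (((ρ a).length : ℝ≥0∞))⁻¹ •
    ∑ j ∈ Finset.range (ρ a).length,
      Measure.map (fun x => (shift β)^[j] (subst ρ x)) (ν.restrict (cyl0 a))

/-- The Feldman `f̄`-pseudometric between two-sided sequences. -/
def fbarSeq (x y : ℤ → α) : ℝ :=
  Filter.limsup (fun n : ℕ =>
    editDist (2 * n) (fun i : Fin (2 * n) => x ((i : ℕ) - (n : ℤ)))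
      (fun i : Fin (2 * n) => y ((i : ℕ) - (n : ℤ)))) Filter.atTop

/-- Maximal word length of a substitution. -/
def maxLen [Fintype α] [Nonempty α] (ρ : α → List β) : ℕ :=
  Finset.univ.sup' Finset.univ_nonempty fun a => (ρ a).length

/-- Minimal word length of a substitution. -/
def minLen [Fintype α] [Nonempty α] (ρ : α → List β) : ℕ :=
  Finset.univ.inf' Finset.univ_nonempty fun a => (ρ a).length

end LBPaper

namespace LBPaper

/-!
`ρ̲ x` is the concatenation of the blocks `ρ (x k)`, and `cumLen ρ x J` is the length of the first
`J` of them. Since each `ρ' a` is a sublist of `ρ a`, the first `J` blocks of `ρ̲' x` form a common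
subsequence of the first `J` blocks of `ρ̲ x`. Choosing `J` maximal such that these fit into `n`
letters, the longest common substring of the `n`-words of `ρ̲ x` and `ρ̲' x` has length at least
`q (n - L)`, where `L` bounds the `|ρ a|` and `q > 1 - C` bounds every ratio `|ρ' a| / |ρ a|` from
below (the alphabet is finite). Hence the edit distance is at most `1 - q + q L / n` for every `x`,
and the coupling `x ↦ (ρ̲ x, ρ̲' x)` of the two Bernoulli-coded measures gives
`f̄_n ≤ 1 - q + q L / n < C` for all large `n`.
-/

section

variable {α β : Type*}

section CumLen

variable (ρ : α → List β) (x : ℤ → α)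

lemma cumLen_zero : cumLen ρ x 0 = 0 := by
  simp [cumLen]

lemma cumLen_natCast (m : ℕ) :
    cumLen ρ x m = ∑ i ∈ Finset.range m, ((ρ (x i)).length : ℤ) := by
  simp [cumLen]

lemma cumLen_neg_natCast (m : ℕ) :
    cumLen ρ x (-m) = -∑ i ∈ Finset.range m, ((ρ (x (-((i : ℤ) + 1)))).length : ℤ) := by
  rcases m.eq_zero_or_pos with rfl | hm
  · simp [cumLen]
  · simp [cumLen, hm.ne']

lemma cumLen_succ (k : ℤ) : cumLen ρ x (k + 1) = cumLen ρ x k + (ρ (x k)).length := by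
  rcases le_or_gt 0 k with hk | hk
  · lift k to ℕ using hk
    rw [← Nat.cast_succ, cumLen_natCast, cumLen_natCast, Finset.sum_range_succ]
  · obtain ⟨m, rfl⟩ : ∃ m : ℕ, k = -((m : ℤ) + 1) := ⟨(-k - 1).toNat, by omega⟩
    rw [show -((m : ℤ) + 1) + 1 = -m by ring, ← Nat.cast_succ, cumLen_neg_natCast,
      cumLen_neg_natCast, Finset.sum_range_succ]
    push_cast
    ring

lemma cumLen_natCast_nonneg (m : ℕ) : 0 ≤ cumLen ρ x m := by
  rw [cumLen_natCast]
  positivity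

variable {ρ} (hρ : ∀ a, ρ a ≠ [])
include hρ

lemma monotone_cumLen_sub_id : Monotone fun k => cumLen ρ x k - k := by
  refine monotone_int_of_le_succ fun k => ?_
  have := List.length_pos_iff.2 (hρ (x k))
  simp only [cumLen_succ]
  omega

lemma cumLen_strictMono : StrictMono (cumLen ρ x) := by
  intro k l hkl
  have := monotone_cumLen_sub_id x hρ hkl.le
  simp only at this
  omega

lemma cumLen_le_self {k : ℤ} (hk : k ≤ 0) : cumLen ρ x k ≤ k := by
  have := monotone_cumLen_sub_id x hρ hk
  simp only [cumLen_zero] at this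
  omega

lemma self_le_cumLen {k : ℤ} (hk : 0 ≤ k) : k ≤ cumLen ρ x k := by
  have := monotone_cumLen_sub_id x hρ hk
  simp only [cumLen_zero] at this
  omega

lemma exists_cumLen_le_lt (j : ℤ) : ∃ k, cumLen ρ x k ≤ j ∧ j < cumLen ρ x (k + 1) := by
  have hbdd : ∀ k, cumLen ρ x k ≤ j → k ≤ max j 0 := fun k hk => by
    rcases le_or_gt k 0 with h | h
    · omega
    · have := self_le_cumLen x hρ h.le
      omega
  have hne : cumLen ρ x (min j 0) ≤ j :=
    (cumLen_le_self x hρ (min_le_right j 0)).trans (min_le_left j 0)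
  obtain ⟨k, hk, hmax⟩ := Int.exists_greatest_of_bdd ⟨_, hbdd⟩ ⟨_, hne⟩
  exact ⟨k, hk, lt_of_not_ge fun h => by have := hmax _ h; omega⟩

lemma exists_natCast_cumLen_le_lt (n : ℕ) :
    ∃ J : ℕ, cumLen ρ x J ≤ n ∧ (n : ℤ) < cumLen ρ x (J + 1) := by
  obtain ⟨k, hk, hnk⟩ := exists_cumLen_le_lt x hρ n
  have hk0 : 0 ≤ k := by
    by_contra! h
    have := cumLen_le_self x hρ (show k + 1 ≤ 0 by omega)
    omega
  lift k to ℕ using hk0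
  exact ⟨k, hk, hnk⟩

lemma blockIdx_eq {j k : ℤ} (h₁ : cumLen ρ x k ≤ j) (h₂ : j < cumLen ρ x (k + 1)) :
    blockIdx ρ x j = k := by
  refine IsGreatest.csSup_eq ⟨h₁, fun m (hm : cumLen ρ x m ≤ j) => ?_⟩
  by_contra! h
  have := (cumLen_strictMono x hρ).monotone (show k + 1 ≤ m by omega)
  omega

lemma subst_cumLen_add [Nonempty β] (k : ℤ) {r : ℕ} (hr : r < (ρ (x k)).length) :
    subst ρ x (cumLen ρ x k + r) = (ρ (x k))[r] := by
  have hk : blockIdx ρ x (cumLen ρ x k + r) = k :=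
    blockIdx_eq x hρ (by omega) (by rw [cumLen_succ]; omega)
  rw [subst, hk, show (cumLen ρ x k + r - cumLen ρ x k).toNat = r by omega,
    List.getD_eq_getElem _ _ hr]

lemma map_range_subst_cumLen_add [Nonempty β] (k : ℤ) :
    (List.range (ρ (x k)).length).map (fun r : ℕ => subst ρ x (cumLen ρ x k + r)) = ρ (x k) :=
  List.ext_getElem (by simp) fun r hr _ => by
    simp only [List.getElem_map, List.getElem_range]
    exact subst_cumLen_add x hρ k (by simpa using hr)

lemma map_range_subst [Nonempty β] (m : ℕ) :
    (List.range (cumLen ρ x m).toNat).map (fun i : ℕ => subst ρ x i) =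
      (List.range m).flatMap fun k : ℕ => ρ (x k) := by
  induction m with
  | zero => simp [cumLen_zero]
  | succ m ih =>
    have h0 := cumLen_natCast_nonneg ρ x m
    rw [Nat.cast_succ, cumLen_succ, Int.toNat_add h0 (by positivity), Int.toNat_natCast,
      List.range_add, List.map_append, ih, List.range_succ, List.flatMap_append,
      List.map_map, List.flatMap_singleton]
    congr 1
    convert map_range_subst_cumLen_add x hρ m using 2
    funext r
    simp [h0]

end CumLen

section EditDist

variable {γ : Type*} {n : ℕ}

lemma mem_upperBounds_lcs_set (a b : Fin n → γ) :
    n ∈ upperBounds {k : ℕ | ∃ i : Fin k → Fin n, ∃ j : Fin k → Fin n,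
      StrictMono i ∧ StrictMono j ∧ ∀ s, a (i s) = b (j s)} := by
  rintro k ⟨i, -, hi, -, -⟩
  simpa using Fintype.card_le_of_injective i hi.injective

lemma lcs_le (a b : Fin n → γ) : lcs n a b ≤ n :=
  csSup_le' (mem_upperBounds_lcs_set a b)

lemma editDist_nonneg (a b : Fin n → γ) : 0 ≤ editDist n a b :=
  sub_nonneg.2 (div_le_one_of_le₀ (by exact_mod_cast lcs_le a b) n.cast_nonneg)

lemma length_le_lcs_of_sublist {a b : Fin n → γ} {l : List γ}
    (ha : l.Sublist (List.ofFn a)) (hb : l.Sublist (List.ofFn b)) : l.length ≤ lcs n a b := by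
  obtain ⟨f, hf⟩ := List.sublist_iff_exists_fin_orderEmbedding_get_eq.1 ha
  obtain ⟨g, hg⟩ := List.sublist_iff_exists_fin_orderEmbedding_get_eq.1 hb
  refine le_csSup ⟨n, mem_upperBounds_lcs_set a b⟩
    ⟨fun s => Fin.cast (List.length_ofFn) (f s), fun s => Fin.cast (List.length_ofFn) (g s),
      fun s t hst => f.strictMono hst, fun s t hst => g.strictMono hst, fun s => ?_⟩
  simpa [List.get_ofFn, Fin.cast] using (hf s).symm.trans (hg s)

lemma ofFn_word (y : ℤ → γ) : List.ofFn (word n y) = (List.range n).map fun i : ℕ => y i :=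
  List.ext_getElem (by simp) fun i _ _ => by simp [word]

end EditDist

lemma map_range_prefix_map_range {γ : Type*} (f : ℕ → γ) {m n : ℕ} (h : m ≤ n) :
    (List.range m).map f <+: (List.range n).map f := by
  obtain ⟨k, rfl⟩ := Nat.exists_eq_add_of_le h
  rw [List.range_add, List.map_append]
  exact List.prefix_append _ _

section Comparison

variable {ρ ρ' : α → List β}

lemma cumLen_le_lcs [Nonempty β] (hρ : ∀ a, ρ a ≠ []) (hρ' : ∀ a, ρ' a ≠ [])
    (hsub : ∀ a, (ρ' a).Sublist (ρ a)) (x : ℤ → α) {n J : ℕ} (hJ : cumLen ρ x J ≤ n) :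
    cumLen ρ' x J ≤ lcs n (word n (subst ρ x)) (word n (subst ρ' x)) := by
  have hl := List.Sublist.flatMap_right (List.range J) fun k _ => hsub (x k)
  rw [← map_range_subst x hρ, ← map_range_subst x hρ'] at hl
  have hlen := hl.length_le
  simp only [List.length_map, List.length_range] at hlen
  have key := length_le_lcs_of_sublist (n := n) (a := word n (subst ρ x))
    (b := word n (subst ρ' x)) (hl.trans ?_) ?_
  · simp only [List.length_map, List.length_range] at key
    omega
  all_goals
    rw [ofFn_word]
    exact (map_range_prefix_map_range _ (by omega)).sublist

lemma mul_cumLen_le {q : ℝ} (hq : ∀ a, q * (ρ a).length ≤ (ρ' a).length) (x : ℤ → α) (m : ℕ) :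
    q * cumLen ρ x m ≤ cumLen ρ' x m := by
  simp only [cumLen_natCast, Int.cast_sum, Int.cast_natCast, Finset.mul_sum]
  exact Finset.sum_le_sum fun i _ => hq _

lemma editDist_word_subst_le [Nonempty β] (hρ : ∀ a, ρ a ≠ []) (hρ' : ∀ a, ρ' a ≠ [])
    (hsub : ∀ a, (ρ' a).Sublist (ρ a)) {q : ℝ} (hq0 : 0 ≤ q)
    (hq : ∀ a, q * (ρ a).length ≤ (ρ' a).length) {L : ℕ} (hL : ∀ a, (ρ a).length ≤ L)
    (x : ℤ → α) {n : ℕ} (hn : 0 < n) :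
    editDist n (word n (subst ρ x)) (word n (subst ρ' x)) ≤ 1 - q + q * L / n := by
  obtain ⟨J, hJn, hnJ⟩ := exists_natCast_cumLen_le_lt x hρ n
  have hJ : (n : ℝ) - L ≤ cumLen ρ x J := by
    rw [cumLen_succ] at hnJ
    have := hL (x J)
    exact_mod_cast (show (n : ℤ) - L ≤ cumLen ρ x J by omega)
  have hlcs : q * (n - L) ≤ lcs n (word n (subst ρ x)) (word n (subst ρ' x)) :=
    calc q * (n - L) ≤ q * cumLen ρ x J := mul_le_mul_of_nonneg_left hJ hq0
      _ ≤ cumLen ρ' x J := mul_cumLen_le hq x J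
      _ ≤ _ := by exact_mod_cast cumLen_le_lcs hρ hρ' hsub x hJn
  have hn' : (0 : ℝ) < n := by exact_mod_cast hn
  rw [editDist, show 1 - q + q * L / n = 1 - q * (n - L) / n by field_simp; ring]
  gcongr

end Comparison

section Measurability

variable [MeasurableSpace α] [MeasurableSingletonClass α] [Countable α] (ρ : α → List β)

lemma measurable_cumLen (k : ℤ) : Measurable fun x : ℤ → α => cumLen ρ x k := by
  have hlen : ∀ i : ℤ, Measurable fun x : ℤ → α => ((ρ (x i)).length : ℤ) := fun i =>
    (measurable_of_countable fun a => ((ρ a).length : ℤ)).comp (measurable_pi_apply i)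
  by_cases hk : 0 ≤ k
  · simp only [cumLen, if_pos hk]
    exact Finset.measurable_sum _ fun i _ => hlen _
  · simp only [cumLen, if_neg hk]
    exact (Finset.measurable_sum _ fun i _ => hlen _).neg

variable {ρ} (hρ : ∀ a, ρ a ≠ [])
include hρ

lemma measurable_blockIdx (j : ℤ) : Measurable fun x : ℤ → α => blockIdx ρ x j := by
  refine measurable_to_countable' fun k => ?_
  have hpre : (fun x : ℤ → α => blockIdx ρ x j) ⁻¹' {k} =
      {x | cumLen ρ x k ≤ j} ∩ {x | j < cumLen ρ x (k + 1)} := by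
    ext x
    refine ⟨fun hk => ?_, fun hk => blockIdx_eq x hρ hk.1 hk.2⟩
    obtain ⟨k', h₁, h₂⟩ := exists_cumLen_le_lt x hρ j
    obtain rfl : k' = k := (blockIdx_eq x hρ h₁ h₂).symm.trans hk
    exact ⟨h₁, h₂⟩
  rw [hpre]
  exact (measurable_cumLen ρ k (MeasurableSet.of_discrete (s := {z | z ≤ j}))).inter
    (measurable_cumLen ρ (k + 1) (MeasurableSet.of_discrete (s := {z | j < z})))

lemma measurable_subst [Nonempty β] [MeasurableSpace β] :
    Measurable (subst ρ : (ℤ → α) → ℤ → β) := by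
  refine measurable_pi_lambda _ fun j => ?_
  have hblock : Measurable fun p : (ℤ → α) × ℤ =>
      (ρ (p.1 p.2)).getD (j - cumLen ρ p.1 p.2).toNat (Classical.arbitrary β) :=
    measurable_from_prod_countable_left fun k =>
      (measurable_of_countable fun q : α × ℤ => (ρ q.1).getD (j - q.2).toNat _).comp
        ((measurable_pi_apply k).prodMk (measurable_cumLen ρ k))
  exact hblock.comp (measurable_id.prodMk (measurable_blockIdx hρ j))

end Measurability

section Fbar

variable [MeasurableSpace β]

lemma fbarN_map_le [Countable β] [MeasurableSingletonClass β] {Ω : Type*} [MeasurableSpace Ω]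
    {μ : Measure Ω} [IsProbabilityMeasure μ] {φ ψ : Ω → ℤ → β} (hφ : Measurable φ)
    (hψ : Measurable ψ) {n : ℕ} {ε : ℝ}
    (h : ∀ ω, editDist n (word n (φ ω)) (word n (ψ ω)) ≤ ε) :
    fbarN n (μ.map φ) (μ.map ψ) ≤ ε := by
  have hword : Measurable (word n : (ℤ → β) → Fin n → β) :=
    measurable_pi_lambda _ fun i => measurable_pi_apply _
  set F := fun ω => (word n (φ ω), word n (ψ ω))
  have hF : Measurable F := (hword.comp hφ).prodMk (hword.comp hψ)
  have hmem : ∫ q, editDist n q.1 q.2 ∂μ.map F ∈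
      {r : ℝ | ∃ m : Measure ((Fin n → β) × (Fin n → β)), IsProbabilityMeasure m ∧
        m.map Prod.fst = (μ.map φ).map (word n) ∧ m.map Prod.snd = (μ.map ψ).map (word n) ∧
        r = ∫ q, editDist n q.1 q.2 ∂m} :=
    ⟨μ.map F, Measure.isProbabilityMeasure_map hF.aemeasurable,
      by rw [Measure.map_map measurable_fst hF, Measure.map_map hword hφ]; rfl,
      by rw [Measure.map_map measurable_snd hF, Measure.map_map hword hψ]; rfl, rfl⟩
  refine (csInf_le ⟨0, ?_⟩ hmem).trans ?_
  · rintro r ⟨m, -, -, -, rfl⟩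
    exact integral_nonneg fun q => editDist_nonneg q.1 q.2
  calc ∫ q, editDist n q.1 q.2 ∂μ.map F
      = ∫ ω, editDist n (word n (φ ω)) (word n (ψ ω)) ∂μ :=
        integral_map hF.aemeasurable (measurable_of_countable _).aestronglyMeasurable
    _ ≤ ∫ _, ε ∂μ := integral_mono_of_nonneg (ae_of_all _ fun ω => editDist_nonneg _ _)
        (integrable_const ε) (ae_of_all _ h)
    _ = ε := by simp

lemma fbar_le_of_eventually_fbarN_le {ν ν' : Measure (ℤ → β)} {ε : ℝ} (hε : 0 < ε)
    (h : ∀ᶠ n in atTop, fbarN n ν ν' ≤ ε) : fbar ν ν' ≤ ε :=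
  csInf_le ⟨0, fun _ hr => hr.1.le⟩ ⟨hε, h.frequently⟩

end Fbar

lemma exists_mem_Ioo_forall_mul_le {ι : Type*} [Finite ι] {c d : ℝ} {u v : ι → ℝ}
    (h : ∀ i, c * u i < v i) (hcd : c < d) : ∃ q ∈ Ioo c d, ∀ i, q * u i ≤ v i := by
  have hnear : ∀ᶠ q in 𝓝 c, ∀ i, q * u i < v i := eventually_all.2 fun i =>
    (continuous_mul_const (u i)).tendsto c |>.eventually (gt_mem_nhds (h i))
  obtain ⟨q, hq, hqcd⟩ :=
    ((hnear.filter_mono nhdsWithin_le_nhds).and (Ioo_mem_nhdsGT hcd)).exists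
  exact ⟨q, hqcd, fun i => (hq i).le⟩

end

/-- If `ρ'` is obtained from `ρ` by deleting, for each letter, less than a
proportion `C` of the letters of the substituted word (keeping the order), then the
corresponding Bernoulli-coded measures are `f̄`-closer than `C`. -/
theorem fbar_kappa_sublist_lt
    {α β : Type*} [Fintype α] [MeasurableSpace α] [MeasurableSingletonClass α]
    [Fintype β] [Nonempty β] [MeasurableSpace β] [MeasurableSingletonClass β]
    (C : ℝ) (hC0 : 0 < C) (hC1 : C < 1)
    (ρ ρ' : α → List β) (hρ : ∀ a, ρ a ≠ []) (hρ' : ∀ a, ρ' a ≠ [])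
    (hsub : ∀ a, (ρ' a).Sublist (ρ a))
    (hlen : ∀ a, (1 - C) * ((ρ a).length : ℝ) < ((ρ' a).length : ℝ))
    (p : α → ℝ) (ν : Measure (ℤ → α)) (hb : IsBernoulli p ν) :
    fbar (kappa ρ ν) (kappa ρ' ν) < C := by
  have : IsProbabilityMeasure ν := hb.1
  obtain ⟨q, ⟨hCq, hq1⟩, hq⟩ := exists_mem_Ioo_forall_mul_le hlen (by linarith : 1 - C < 1)
  obtain ⟨L, hL⟩ := Finite.exists_le fun a => (ρ a).length
  have hδ : 0 < (C - (1 - q)) / 2 := by linarith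
  have hlarge : ∀ᶠ n : ℕ in atTop, q * L / n ≤ (C - (1 - q)) / 2 ∧ 0 < n :=
    ((tendsto_const_div_atTop_nhds_zero_nat (q * L)).eventually (ge_mem_nhds hδ)).and
      (eventually_gt_atTop 0)
  have hfbar : fbar (kappa ρ ν) (kappa ρ' ν) ≤ 1 - q + (C - (1 - q)) / 2 :=
    fbar_le_of_eventually_fbarN_le (by linarith) <| hlarge.mono fun n ⟨hn, hn0⟩ =>
      fbarN_map_le (measurable_subst hρ) (measurable_subst hρ') fun x =>
        (editDist_word_subst_le hρ hρ' hsub (by linarith) hq hL x hn0).trans (by linarith)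
  linarith

end LBPaper
end
end

section
/- Uniform Law of Large Numbers for Bernoulli measures: Let C be a finite alphabet. For every δ > 0 there exists L = L(δ) > 0 such that for every Bernoulli measure p on C^ℤ, the set G(p,L,δ) of all sequences b̄ ∈ C^ℤ satisfying, for every ℓ ∈ ℕ and every c ∈ C, |p([c]) − (1/ℓ)·card{i ∈ {0,…,ℓ−1} : b_i = c}| < L/ℓ + δ, has measure p(G(p,L,δ)) > 1 − δ. -/
open MeasureTheory Filter Set
open scoped ENNReal NNReal Topology

noncomputable section

/-!
Under a Bernoulli measure the coordinates are i.i.d., so for a letter `c` the centred indicators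
`1[b i = c] - p c` are independent, have mean zero and take values in an interval of length one.
Hoeffding's inequality bounds the probability that the frequency of `c` in `b 0, …, b (ℓ - 1)`
deviates from `p c` by at least `δ` by `2 exp (-2 ℓ δ²)`, uniformly in `p`. These bounds are
summable in `ℓ`: choose `N` with tail sum below `δ` and take `L = N + 1`; block lengths
`ℓ ≤ N + 1` then never violate the bound, since a frequency deviation is at most `1 ≤ L / ℓ`.
-/

open ProbabilityTheory

namespace MeasureTheory

lemma measure_iUnion_add_le_of_le_geometric {Ω : Type*} [MeasurableSpace Ω] {μ : Measure Ω}
    {s : ℕ → Set Ω} {C r : ℝ} (hC : 0 ≤ C) (hr₀ : 0 ≤ r) (hr₁ : r < 1)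
    (hs : ∀ n, μ (s n) ≤ ENNReal.ofReal (C * r ^ n)) (N : ℕ) :
    μ (⋃ m, s (m + N)) ≤ ENNReal.ofReal (C / (1 - r) * r ^ N) := by
  have hsum : Summable fun m => C * r ^ (m + N) := by
    simpa [pow_add, mul_assoc] using
      ((summable_geometric_of_lt_one hr₀ hr₁).mul_right (r ^ N)).mul_left C
  calc μ (⋃ m, s (m + N)) ≤ ∑' m, μ (s (m + N)) := measure_iUnion_le _
    _ ≤ ∑' m, ENNReal.ofReal (C * r ^ (m + N)) := ENNReal.tsum_le_tsum fun m => hs _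
    _ = ENNReal.ofReal (∑' m, C * r ^ (m + N)) :=
      (ENNReal.ofReal_tsum_of_nonneg (fun m => by positivity) hsum).symm
    _ = ENNReal.ofReal (C / (1 - r) * r ^ N) := by
      simp only [pow_add, ← mul_assoc, tsum_mul_right, tsum_mul_left,
        tsum_geometric_of_lt_one hr₀ hr₁]
      ring_nf

lemma one_sub_measureReal_compl_le {Ω : Type*} [MeasurableSpace Ω] {μ : Measure Ω}
    [IsProbabilityMeasure μ] (s : Set Ω) : 1 - μ.real sᶜ ≤ μ.real s := by
  have := measureReal_union_le (μ := μ) s sᶜ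
  rw [Set.union_compl_self, probReal_univ] at this
  linarith

end MeasureTheory

namespace ProbabilityTheory

open Real

lemma measureReal_abs_sum_range_ge_le_of_iIndepFun {Ω : Type*} {mΩ : MeasurableSpace Ω}
    {μ : Measure Ω} {X : ℕ → Ω → ℝ} (h_indep : iIndepFun X μ) {c : ℝ≥0} {n : ℕ}
    (h_subG : ∀ i < n, HasSubgaussianMGF (X i) c μ) {ε : ℝ} (hε : 0 ≤ ε) :
    μ.real {ω | ε ≤ |∑ i ∈ Finset.range n, X i ω|} ≤ 2 * exp (-ε ^ 2 / (2 * n * c)) := by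
  have := h_indep.isProbabilityMeasure
  have h_upper := HasSubgaussianMGF.measure_sum_range_ge_le_of_iIndepFun h_indep h_subG hε
  have h_lower := HasSubgaussianMGF.measure_sum_range_ge_le_of_iIndepFun (X := fun i => -X i)
    (h_indep.comp (fun _ => Neg.neg) fun _ => measurable_neg) (fun i hi => (h_subG i hi).neg) hε
  have hsplit : {ω | ε ≤ |∑ i ∈ Finset.range n, X i ω|} ⊆
      {ω | ε ≤ ∑ i ∈ Finset.range n, X i ω} ∪ {ω | ε ≤ ∑ i ∈ Finset.range n, (-X i) ω} := by
    intro ω (hω : ε ≤ |_|)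
    rcases le_abs'.1 hω with h | h
    · right
      change ε ≤ ∑ i ∈ Finset.range n, -X i ω
      rw [Finset.sum_neg_distrib]
      linarith
    · exact Or.inl h
  calc μ.real _ ≤ μ.real _ := measureReal_mono hsplit
    _ ≤ _ := measureReal_union_le _ _
    _ ≤ _ := by linarith

end ProbabilityTheory

namespace LBPaper

open Finset Real

section EmpiricalFrequency

variable {γ : Type*} [DecidableEq γ]

def empiricalFreq (b : ℤ → γ) (ℓ : ℕ) (c : γ) : ℝ :=
  (ℓ : ℝ)⁻¹ * (((Finset.range ℓ).filter fun i => b ((i : ℕ) : ℤ) = c).card : ℝ)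

lemma empiricalFreq_nonneg (b : ℤ → γ) (ℓ : ℕ) (c : γ) : 0 ≤ empiricalFreq b ℓ c := by
  unfold empiricalFreq
  positivity

lemma empiricalFreq_le_one (b : ℤ → γ) (ℓ : ℕ) (c : γ) : empiricalFreq b ℓ c ≤ 1 := by
  rcases Nat.eq_zero_or_pos ℓ with rfl | hℓ
  · simp [empiricalFreq]
  rw [empiricalFreq, inv_mul_le_one₀ (by positivity)]
  exact_mod_cast (card_filter_le _ _).trans (card_range ℓ).le

lemma abs_sub_empiricalFreq_le_one {q : ℝ} (hq₀ : 0 ≤ q) (hq₁ : q ≤ 1) (b : ℤ → γ) (ℓ : ℕ)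
    (c : γ) : |q - empiricalFreq b ℓ c| ≤ 1 := by
  have := empiricalFreq_nonneg b ℓ c
  have := empiricalFreq_le_one b ℓ c
  rw [abs_le]
  constructor <;> linarith

lemma natCast_mul_empiricalFreq_sub {ℓ : ℕ} (hℓ : ℓ ≠ 0) (b : ℤ → γ) (c : γ) (q : ℝ) :
    ℓ * (empiricalFreq b ℓ c - q) = ∑ i ∈ range ℓ, ((if b i = c then 1 else 0) - q) := by
  rw [empiricalFreq, sum_sub_distrib, ← natCast_card_filter, sum_const, card_range, nsmul_eq_mul,
    mul_sub, ← mul_assoc, mul_inv_cancel₀ (by exact_mod_cast hℓ), one_mul]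

lemma compl_setOf_abs_sub_empiricalFreq_lt_subset {p : γ → ℝ} (hp₀ : ∀ c, 0 ≤ p c)
    (hp₁ : ∀ c, p c ≤ 1) {L δ : ℝ} (hδ : 0 < δ) {N : ℕ} (hNL : N ≤ L) :
    {b : ℤ → γ | ∀ ℓ : ℕ, 0 < ℓ → ∀ c, |p c - empiricalFreq b ℓ c| < L / ℓ + δ}ᶜ ⊆
      ⋃ m : ℕ, ⋃ c, {b | δ ≤ |p c - empiricalFreq b (m + N) c|} := by
  intro b hb
  simp only [Set.mem_compl_iff, Set.mem_ofPred_eq, not_forall, not_lt] at hb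
  obtain ⟨ℓ, hℓ, c, hdev⟩ := hb
  have hℓR : (0 : ℝ) < ℓ := by exact_mod_cast hℓ
  have hL : 0 ≤ L / ℓ := div_nonneg ((Nat.cast_nonneg N).trans hNL) hℓR.le
  have hNℓ : N ≤ ℓ := by
    have := abs_sub_empiricalFreq_le_one (hp₀ c) (hp₁ c) b ℓ c
    have : L < ℓ := (div_lt_one hℓR).1 (by linarith)
    exact_mod_cast hNL.trans this.le
  refine Set.mem_iUnion.2 ⟨ℓ - N, Set.mem_iUnion.2 ⟨c, ?_⟩⟩
  rw [Set.mem_ofPred_eq, Nat.sub_add_cancel hNℓ]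
  linarith

end EmpiricalFrequency

namespace IsBernoulli

variable {γ : Type*} [MeasurableSpace γ] {p : γ → ℝ} {ν : Measure (ℤ → γ)}

lemma nonneg (hb : IsBernoulli p ν) (a : γ) : 0 ≤ p a := by
  simpa using ENNReal.toReal_nonneg.trans_eq (hb.2 {0} fun _ => a)

lemma measure_cylinder (hb : IsBernoulli p ν) (s : Finset ℤ) (f : ℤ → γ) :
    ν {x | ∀ i ∈ s, x i = f i} = ∏ i ∈ s, ENNReal.ofReal (p (f i)) := by
  have := hb.1
  rw [← ENNReal.ofReal_prod_of_nonneg fun i _ => hb.nonneg _, ← hb.2 s f,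
    ENNReal.ofReal_toReal (measure_ne_top _ _)]

lemma measureReal_eval_eq (hb : IsBernoulli p ν) (i : ℤ) (a : γ) :
    ν.real {x | x i = a} = p a := by
  simpa [Measure.real] using hb.2 {i} fun _ => a

lemma le_one (hb : IsBernoulli p ν) (a : γ) : p a ≤ 1 := by
  have := hb.1
  exact hb.measureReal_eval_eq 0 a ▸ measureReal_le_one

variable [MeasurableSingletonClass γ]

lemma measure_box (hb : IsBernoulli p ν) (s : Finset ℤ) (A : ℤ → Finset γ) :
    ν {x | ∀ i ∈ s, x i ∈ A i} = ∏ i ∈ s, ∑ a ∈ A i, ENNReal.ofReal (p a) := by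
  have := hb.1
  obtain ⟨x₀⟩ := nonempty_of_isProbabilityMeasure ν
  let extend (g : ∀ i ∈ s, γ) : ℤ → γ := fun i => if hi : i ∈ s then g i hi else x₀ i
  have hcyl : ∀ g, MeasurableSet {x : ℤ → γ | ∀ i ∈ s, x i = extend g i} := fun g => by
    simp only [Set.ofPred_forall]
    exact .biInter s.countable_toSet fun i _ => measurable_pi_apply i (measurableSet_singleton _)
  have hbox : {x : ℤ → γ | ∀ i ∈ s, x i ∈ A i} =
      ⋃ g ∈ s.pi A, {x | ∀ i ∈ s, x i = extend g i} := by
    ext x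
    simp only [Set.mem_iUnion, Finset.mem_pi, exists_prop]
    refine ⟨fun hx => ⟨fun i _ => x i, hx, fun i hi => by simp [extend, hi]⟩, ?_⟩
    rintro ⟨g, hg, hx⟩ i hi
    simpa [hx i hi, extend, hi] using hg i hi
  have hdisj : Set.PairwiseDisjoint (↑(s.pi A))
      fun g => {x : ℤ → γ | ∀ i ∈ s, x i = extend g i} := by
    intro g _ g' _ hne
    refine Set.disjoint_left.2 fun x hx hx' => hne ?_
    funext i hi
    simpa [extend, hi] using (hx i hi).symm.trans (hx' i hi)
  rw [Finset.prod_sum, hbox, measure_biUnion_finset hdisj fun g _ => hcyl g]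
  refine Finset.sum_congr rfl fun g _ => ?_
  rw [hb.measure_cylinder, ← Finset.prod_attach]
  refine Finset.prod_congr rfl fun i _ => ?_
  simp [extend, i.2]

variable [Fintype γ]

lemma iIndepFun_eval (hb : IsBernoulli p ν) : iIndepFun (fun i (x : ℤ → γ) => x i) ν := by
  classical
  have := hb.1
  rw [iIndepFun_iff_measure_inter_preimage_eq_mul]
  intro s A _
  have hbox := hb.measure_box s fun i => (A i).toFinset
  have hcoord : ∀ i, ν ((fun x : ℤ → γ => x i) ⁻¹' A i) =
      ∑ a ∈ (A i).toFinset, ENNReal.ofReal (p a) := fun i => by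
    simpa [Set.preimage] using hb.measure_box {i} fun i => (A i).toFinset
  simp only [Set.mem_toFinset] at hbox
  simp only [hcoord]
  rw [← hbox]
  congr 1
  ext x
  simp

variable [DecidableEq γ]

lemma measureReal_abs_sub_empiricalFreq_ge_le (hb : IsBernoulli p ν) (c : γ) (ℓ : ℕ) {t : ℝ}
    (ht : 0 ≤ t) :
    ν.real {b | t ≤ |p c - empiricalFreq b ℓ c|} ≤ 2 * exp (-2 * ℓ * t ^ 2) := by
  have := hb.1
  rcases eq_or_ne ℓ 0 with rfl | hℓ
  · simpa using measureReal_le_one.trans one_le_two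
  let X (i : ℕ) (x : ℤ → γ) : ℝ := if x i = c then 1 else 0
  have hX : ∀ i, X i = {x | x i = c}.indicator 1 := fun i => by
    ext x
    simp [X, Set.indicator_apply]
  have hmeas : ∀ i : ℕ, MeasurableSet {x : ℤ → γ | x i = c} := fun i =>
    measurableSet_eq_fun (measurable_pi_apply _) measurable_const
  have hmean : ∀ i, ν[X i] = p c := fun i => by
    rw [hX, integral_indicator_one (hmeas i), hb.measureReal_eval_eq]
  have h_indep : iIndepFun (fun i x => X i x - p c) ν :=
    (hb.iIndepFun_eval.precomp Nat.cast_injective).comp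
      (fun _ a => (if a = c then 1 else 0) - p c) fun _ => .of_discrete
  have h_subG : ∀ i, HasSubgaussianMGF (fun x => X i x - p c) ((‖(1 : ℝ) - 0‖₊ / 2) ^ 2) ν :=
    fun i => by
      simpa [hmean] using hasSubgaussianMGF_of_mem_Icc (μ := ν) (X := X i) (a := 0) (b := 1)
        (hX i ▸ measurable_one.indicator (hmeas i)).aemeasurable
        (ae_of_all _ fun x => by by_cases h : x i = c <;> simp [X, h])
  have hℓR : (0 : ℝ) < ℓ := by exact_mod_cast Nat.pos_of_ne_zero hℓ
  have hevent : {b : ℤ → γ | t ≤ |p c - empiricalFreq b ℓ c|} =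
      {b | ℓ * t ≤ |∑ i ∈ range ℓ, (X i b - p c)|} := by
    ext b
    simp only [Set.mem_ofPred_eq, X, ← natCast_mul_empiricalFreq_sub hℓ, abs_mul, Nat.abs_cast,
      abs_sub_comm (p c), mul_le_mul_iff_right₀ hℓR]
  rw [hevent]
  convert measureReal_abs_sum_range_ge_le_of_iIndepFun h_indep (fun i _ => h_subG i)
    (by positivity : 0 ≤ (ℓ : ℝ) * t) using 3
  push_cast
  field_simp
  norm_num

lemma measure_iUnion_abs_sub_empiricalFreq_ge_le (hb : IsBernoulli p ν) {t : ℝ} (ht : 0 ≤ t)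
    (ℓ : ℕ) :
    ν (⋃ c, {b | t ≤ |p c - empiricalFreq b ℓ c|}) ≤
      ENNReal.ofReal (2 * Fintype.card γ * exp (-2 * t ^ 2) ^ ℓ) := by
  have := hb.1
  calc ν (⋃ c, {b | t ≤ |p c - empiricalFreq b ℓ c|})
      ≤ ∑ c, ν {b | t ≤ |p c - empiricalFreq b ℓ c|} := measure_iUnion_fintype_le _ _
    _ ≤ ∑ _c : γ, ENNReal.ofReal (2 * exp (-2 * t ^ 2) ^ ℓ) := by
      gcongr with c
      rw [← ofReal_measureReal, ← exp_nat_mul, show ℓ * (-2 * t ^ 2) = -2 * ℓ * t ^ 2 by ring]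
      exact ENNReal.ofReal_le_ofReal (hb.measureReal_abs_sub_empiricalFreq_ge_le c ℓ ht)
    _ = ENNReal.ofReal (2 * Fintype.card γ * exp (-2 * t ^ 2) ^ ℓ) := by
      rw [Finset.sum_const, Finset.card_univ, nsmul_eq_mul, ← ENNReal.ofReal_natCast,
        ← ENNReal.ofReal_mul (by positivity)]
      ring_nf

end IsBernoulli

/-- Uniform law of large numbers for Bernoulli measures: for every
`δ > 0` there is `L = L(δ)` such that for every Bernoulli measure `p` on `C^ℤ`, the set of
sequences whose letter frequencies on all initial blocks of length `ℓ` deviate from the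
expected ones by less than `L/ℓ + δ` has measure greater than `1 - δ`. -/
theorem uniform_lln_bernoulli
    {γ : Type*} [Fintype γ] [DecidableEq γ] [MeasurableSpace γ] [MeasurableSingletonClass γ]
    (δ : ℝ) (hδ : 0 < δ) :
    ∃ L : ℝ, 0 < L ∧
      ∀ (p : γ → ℝ) (ν : Measure (ℤ → γ)), IsBernoulli p ν →
        (1 - δ : ℝ) <
          (ν {b : ℤ → γ | ∀ ℓ : ℕ, 0 < ℓ → ∀ c : γ,
            |p c - (ℓ : ℝ)⁻¹ *
              (((Finset.range ℓ).filter fun i => b ((i : ℕ) : ℤ) = c).card : ℝ)| <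
              L / (ℓ : ℝ) + δ}).toReal := by
  set r := exp (-2 * δ ^ 2)
  have hr₀ : 0 < r := exp_pos _
  have hr₁ : r < 1 := exp_lt_one_iff.2 (by nlinarith)
  set K := 2 * Fintype.card γ / (1 - r)
  obtain ⟨N, hN⟩ := (((tendsto_pow_atTop_nhds_zero_of_lt_one hr₀.le hr₁).const_mul K).eventually
    (gt_mem_nhds (by simpa using hδ))).exists
  refine ⟨N + 1, by positivity, fun p ν hb => ?_⟩
  have := hb.1
  let G := {b : ℤ → γ | ∀ ℓ : ℕ, 0 < ℓ → ∀ c, |p c - empiricalFreq b ℓ c| < (N + 1) / ℓ + δ}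
  change 1 - δ < ν.real G
  have hbad := (measure_mono (compl_setOf_abs_sub_empiricalFreq_lt_subset hb.nonneg hb.le_one hδ
    (by linarith : (N : ℝ) ≤ N + 1))).trans <| measure_iUnion_add_le_of_le_geometric
      (by positivity) hr₀.le hr₁ (hb.measure_iUnion_abs_sub_empiricalFreq_ge_le hδ.le) N
  have hbad_real : ν.real _ ≤ _ := ENNReal.toReal_le_of_le_ofReal (by positivity) hbad
  linarith [one_sub_measureReal_compl_le (μ := ν) G]

end LBPaper
end
end

section
/- Consider a repeat-and-tail cascade of substitutions ρ_n: A_n → B^* satisfying the control-of-tail-lengths assumption with constant K > 0. For every ε > 0 there exists n_0 ∈ ℕ such that for every Bernoulli measure p on A^ℤ and every n > n_0, the Bernoulli measures p_n and p̃_n on (A_n)^ℤ satisfy D_{A_n}(p̃_n, p_n) = Σ_{a∈A_n} |p̃_n([a]) − p_n([a])| < ε. -/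
open MeasureTheory Filter Set
open scoped ENNReal NNReal Topology

noncomputable section

namespace LBPaper

/-! ### Repeat-and-tail cascades of substitutions -/

universe u v

/-- The cascade of alphabets: `Alph A m 0 = A` and `Alph A m (n+1) = (Alph A m n)^(m n)`. -/
def Alph (A : Type u) (m : ℕ → ℕ) : ℕ → Type u :=
  fun n => Nat.rec A (fun k T => Fin (m k) → T) n

instance instAlphFintype {A : Type u} [Fintype A] (m : ℕ → ℕ) :
    ∀ n, Fintype (Alph A m n)
  | 0 => inferInstanceAs (Fintype A)
  | n + 1 =>
    letI := instAlphFintype (A := A) m n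
    inferInstanceAs (Fintype (Fin (m n) → Alph A m n))

instance instAlphNonempty {A : Type u} [Nonempty A] (m : ℕ → ℕ) :
    ∀ n, Nonempty (Alph A m n)
  | 0 => inferInstanceAs (Nonempty A)
  | n + 1 =>
    letI := instAlphNonempty (A := A) m n
    inferInstanceAs (Nonempty (Fin (m n) → Alph A m n))

instance instAlphMeasurableSpace {A : Type u} (m : ℕ → ℕ) (n : ℕ) :
    MeasurableSpace (Alph A m n) := ⊤

instance instAlphMeasurableSingletonClass {A : Type u} (m : ℕ → ℕ) (n : ℕ) :
    MeasurableSingletonClass (Alph A m n) :=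
  ⟨fun _ => MeasurableSpace.measurableSet_top⟩

variable {A : Type u} {B : Type v}

/-- The cascade of repeat-and-tail substitutions determined by the initial substitution
`ρ₀` and the tailing maps `t`. -/
def casc (m : ℕ → ℕ) (ρ₀ : A → List B) (t : (n : ℕ) → Alph A m (n + 1) → List B) :
    (n : ℕ) → Alph A m n → List B
  | 0, a => ρ₀ a
  | n + 1, a => (List.ofFn fun i : Fin (m n) => casc m ρ₀ t n (a i)).flatten ++ t n a

/-- Control-of-tail-lengths assumption with constant `K`: the initial words all are nonempty
of equal length, and the tail added at level `n+1` has length at most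
`K 2^{-(n+1)}` times the sum of the lengths of the level-`n` words it follows. -/
def TailControlled (m : ℕ → ℕ) (ρ₀ : A → List B)
    (t : (n : ℕ) → Alph A m (n + 1) → List B) (K : ℝ) : Prop :=
  (∃ ℓ : ℕ, 0 < ℓ ∧ ∀ a : A, (ρ₀ a).length = ℓ) ∧
    ∀ (n : ℕ) (a : Alph A m (n + 1)),
      ((t n a).length : ℝ) ≤
        K / 2 ^ (n + 1) * ∑ i : Fin (m n), ((casc m ρ₀ t n (a i)).length : ℝ)

/-- The spelling of a letter of `Alph A m (k+d)` as a word over `Alph A m k`. -/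
def spellTo (m : ℕ → ℕ) (k : ℕ) : (d : ℕ) → Alph A m (k + d) → List (Alph A m k)
  | 0, a => [a]
  | d + 1, a => (List.ofFn fun i : Fin (m (k + d)) => spellTo m k d (a i)).flatten

/-- The spelling of a letter of `Alph A m n` as a word over the initial alphabet `A`. -/
def spell0 (m : ℕ → ℕ) : (n : ℕ) → Alph A m n → List A
  | 0, a => [a]
  | n + 1, a => (List.ofFn fun i : Fin (m n) => spell0 m n (a i)).flatten

/-- The probability vector of the Bernoulli measure `p_n = (S̲_{n,0}^{-1})_* p`
on `(Alph A m n)^ℤ`. -/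
def pvec (m : ℕ → ℕ) (p : A → ℝ) (n : ℕ) (a : Alph A m n) : ℝ :=
  ((spell0 m n a).map p).prod

/-- The probability vector of the length-reweighted Bernoulli measure `p̃_n`. -/
def ptilde [Fintype A] (m : ℕ → ℕ) (ρ₀ : A → List B)
    (t : (n : ℕ) → Alph A m (n + 1) → List B) (p : A → ℝ) (n : ℕ) (a : Alph A m n) : ℝ :=
  (((casc m ρ₀ t n a).length : ℝ) * pvec m p n a) /
    (∑ b : Alph A m n, ((casc m ρ₀ t n b).length : ℝ) * pvec m p n b)

end LBPaper

namespace LBPaper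

variable {A : Type*} {B : Type*}

/-- `max|ρ_n|`: the maximal length of a level-`n` word of the cascade. -/
def cascMax [Fintype A] [Nonempty A] (m : ℕ → ℕ) (ρ₀ : A → List B)
    (t : (n : ℕ) → Alph A m (n + 1) → List B) (n : ℕ) : ℕ :=
  Finset.univ.sup' Finset.univ_nonempty fun a : Alph A m n => (casc m ρ₀ t n a).length

/-- `min|ρ_n|`: the minimal length of a level-`n` word of the cascade. -/
def cascMin [Fintype A] [Nonempty A] (m : ℕ → ℕ) (ρ₀ : A → List B)
    (t : (n : ℕ) → Alph A m (n + 1) → List B) (n : ℕ) : ℕ :=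
  Finset.univ.inf' Finset.univ_nonempty fun a : Alph A m n => (casc m ρ₀ t n a).length

end LBPaper

/-!
Write `L_n(a) = |ρ_n(a)|` and `N_n = |ρ₀| m_1 ⋯ m_n ≤ L_n(a)`. The sum `∑ |p̃_n - p_n|` equals
`E|L_n - E L_n| / E L_n` (expectations under `p_n`), which by Cauchy–Schwarz is at most
`√Var(L_n) / N_n`. A level-`(n+1)` word is a concatenation of `m_{n+1}` independent
`p_n`-distributed level-`n` words followed by a tail; since all lengths stay below `e^K N_n`,
the tail has length `O(2^{-n} N_{n+1})`. So `v_n = Var(L_n) / N_n²` satisfies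
`v_{n+1} ≤ (3/2) v_n / m_{n+1} + O(4^{-n}) ≤ (3/4) v_n + O(4^{-n})`, whence
`v_n = O((3/4)^n)` uniformly in `p`.
-/

namespace LBPaper

section WeightedMoments

variable {α : Type*} [Fintype α]

def weightedMean (w f : α → ℝ) : ℝ := ∑ x, w x * f x

def weightedVar (w f : α → ℝ) : ℝ := ∑ x, w x * (f x - weightedMean w f) ^ 2

variable {w : α → ℝ}

lemma weightedMean_sum {ι : Type*} (s : Finset ι) (F : ι → α → ℝ) :
    weightedMean w (fun x => ∑ i ∈ s, F i x) = ∑ i ∈ s, weightedMean w (F i) := by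
  simp only [weightedMean, Finset.mul_sum]
  exact Finset.sum_comm

lemma le_weightedMean (hw0 : ∀ x, 0 ≤ w x) (hw : ∑ x, w x = 1) {f : α → ℝ} {c : ℝ}
    (hf : ∀ x, c ≤ f x) : c ≤ weightedMean w f :=
  calc c = ∑ x, w x * c := by rw [← Finset.sum_mul, hw, one_mul]
    _ ≤ weightedMean w f := Finset.sum_le_sum fun x _ => mul_le_mul_of_nonneg_left (hf x) (hw0 x)

lemma weightedVar_nonneg (hw0 : ∀ x, 0 ≤ w x) (f : α → ℝ) : 0 ≤ weightedVar w f :=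
  Finset.sum_nonneg fun x _ => mul_nonneg (hw0 x) (sq_nonneg _)

lemma weightedVar_eq_sub (hw : ∑ x, w x = 1) (f : α → ℝ) :
    weightedVar w f = weightedMean w (fun x => f x ^ 2) - weightedMean w f ^ 2 := by
  have expand : ∀ x, w x * (f x - weightedMean w f) ^ 2
      = w x * f x ^ 2 - 2 * weightedMean w f * (w x * f x) + weightedMean w f ^ 2 * w x :=
    fun x => by ring
  simp only [weightedVar, expand, Finset.sum_add_distrib, Finset.sum_sub_distrib,
    ← Finset.mul_sum, hw]
  simp only [weightedMean]
  ring

lemma weightedVar_const (hw : ∑ x, w x = 1) (c : ℝ) : weightedVar w (fun _ => c) = 0 := by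
  simp [weightedVar_eq_sub hw, weightedMean, ← Finset.sum_mul, hw]

lemma weightedVar_le_sq (hw0 : ∀ x, 0 ≤ w x) (hw : ∑ x, w x = 1) {f : α → ℝ} {τ : ℝ}
    (hf : ∀ x, |f x| ≤ τ) : weightedVar w f ≤ τ ^ 2 :=
  calc weightedVar w f ≤ weightedMean w (fun x => f x ^ 2) := by
        rw [weightedVar_eq_sub hw]; linarith [sq_nonneg (weightedMean w f)]
    _ ≤ ∑ x, w x * τ ^ 2 := Finset.sum_le_sum fun x _ =>
        mul_le_mul_of_nonneg_left (sq_le_sq' (abs_le.1 (hf x)).1 (abs_le.1 (hf x)).2) (hw0 x)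
    _ = τ ^ 2 := by rw [← Finset.sum_mul, hw, one_mul]

lemma weightedVar_add_le (hw0 : ∀ x, 0 ≤ w x) (f g : α → ℝ) :
    weightedVar w (f + g) ≤ 3 / 2 * weightedVar w f + 3 * weightedVar w g := by
  have hmean : weightedMean w (f + g) = weightedMean w f + weightedMean w g := by
    simp only [weightedMean, Pi.add_apply, mul_add, Finset.sum_add_distrib]
  simp only [weightedVar, hmean, Finset.mul_sum, ← Finset.sum_add_distrib]
  refine Finset.sum_le_sum fun x _ => ?_
  -- `(a + b)² ≤ 3/2 a² + 3 b²` is `(a - 2b)² ≥ 0`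
  rw [Pi.add_apply]
  nlinarith [mul_nonneg (hw0 x) (sq_nonneg (f x - weightedMean w f - 2 * (g x - weightedMean w g)))]

lemma sq_sum_abs_reweight_sub_le (hw0 : ∀ x, 0 ≤ w x) (hw : ∑ x, w x = 1) {f : α → ℝ}
    (hf : 0 < weightedMean w f) :
    (∑ x, |f x * w x / ∑ y, f y * w y - w x|) ^ 2
      ≤ weightedVar w f / weightedMean w f ^ 2 := by
  set μ := weightedMean w f
  have hμ : ∑ y, f y * w y = μ := Finset.sum_congr rfl fun y _ => mul_comm _ _
  have hterm : ∀ x, |f x * w x / μ - w x| = w x * |f x - μ| / μ := fun x => by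
    rw [show f x * w x / μ - w x = w x * (f x - μ) / μ by field_simp,
      abs_div, abs_mul, abs_of_nonneg (hw0 x), abs_of_pos hf]
  have hCS : (∑ x, w x * |f x - μ|) ^ 2 ≤ (∑ x, w x) * weightedVar w f :=
    Finset.sum_sq_le_sum_mul_sum_of_sq_le_mul _ (fun x _ => hw0 x)
      (fun x _ => mul_nonneg (hw0 x) (sq_nonneg _))
      (fun x _ => by rw [mul_pow, sq_abs, sq]; exact le_of_eq (by ring))
  simp only [hμ, hterm, ← Finset.sum_div, div_pow]
  rw [hw, one_mul] at hCS
  exact div_le_div_of_nonneg_right hCS (sq_nonneg μ)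

end WeightedMoments

section ProductWeights

variable {α : Type*} [Fintype α] {w : α → ℝ} {M : ℕ}

lemma sum_pi_prod_mul_prod (w : α → ℝ) (h : Fin M → α → ℝ) :
    ∑ a : Fin M → α, (∏ k, w (a k)) * ∏ k, h k (a k) = ∏ k, ∑ x, w x * h k x := by
  simp only [← Finset.prod_mul_distrib]
  exact (Fintype.prod_sum fun k x => w x * h k x).symm

lemma weightedMean_pi_apply (hw : ∑ x, w x = 1) (f : α → ℝ) (i : Fin M) :
    weightedMean (fun a : Fin M → α => ∏ k, w (a k)) (fun a => f (a i))
      = weightedMean w f := by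
  have h := sum_pi_prod_mul_prod w fun k x => if k = i then f x else 1
  have hfactor : ∀ k, (∑ x, w x * if k = i then f x else 1)
      = if k = i then weightedMean w f else 1 := fun k => by
    split_ifs <;> simp [weightedMean, hw]
  simp only [Finset.prod_ite_eq', Finset.mem_univ, if_true, hfactor] at h
  exact h

lemma weightedMean_pi_apply_mul_apply (hw : ∑ x, w x = 1) (f g : α → ℝ) {i j : Fin M}
    (hij : i ≠ j) :
    weightedMean (fun a : Fin M → α => ∏ k, w (a k)) (fun a => f (a i) * g (a j))
      = weightedMean w f * weightedMean w g := by
  have h := sum_pi_prod_mul_prod w fun k x =>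
    (if k = i then f x else 1) * (if k = j then g x else 1)
  have hfactor : ∀ k, (∑ x, w x * ((if k = i then f x else 1) * (if k = j then g x else 1)))
      = (if k = i then weightedMean w f else 1) * (if k = j then weightedMean w g else 1) :=
    fun k => by
      by_cases hki : k = i
      · subst hki
        simp [hij, weightedMean]
      · by_cases hkj : k = j <;> simp [hki, hkj, hij.symm, weightedMean, hw]
  simp only [Finset.prod_mul_distrib, Finset.prod_ite_eq', Finset.mem_univ, if_true,
    hfactor] at h
  exact h

lemma weightedVar_pi_sum (hw : ∑ x, w x = 1) (f : α → ℝ) :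
    weightedVar (fun a : Fin M → α => ∏ k, w (a k)) (fun a => ∑ i, f (a i))
      = M * weightedVar w f := by
  set P := fun a : Fin M → α => ∏ k, w (a k)
  set g := fun x => f x - weightedMean w f
  have hg : weightedMean w g = 0 := by
    simp only [g, weightedMean, mul_sub, Finset.sum_sub_distrib, ← Finset.sum_mul, hw, one_mul,
      sub_self]
  have hmean : weightedMean P (fun a => ∑ i, f (a i)) = M * weightedMean w f := by
    simp [weightedMean_sum, weightedMean_pi_apply hw, P]
  have hpair : ∀ i j : Fin M, weightedMean P (fun a => g (a i) * g (a j))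
      = if i = j then weightedVar w f else 0 := by
    intro i j
    split_ifs with hij
    · subst hij
      exact weightedMean_pi_apply hw (fun x => g x * g x) i |>.trans
        (Finset.sum_congr rfl fun x _ => by rw [sq])
    · rw [weightedMean_pi_apply_mul_apply hw g g hij, hg, mul_zero]
  have hcenter : ∀ a : Fin M → α, ∑ i, g (a i) = ∑ i, f (a i) - M * weightedMean w f :=
    fun a => by simp [g, Finset.sum_sub_distrib]
  calc weightedVar P (fun a => ∑ i, f (a i))
      = weightedMean P (fun a => ∑ i, ∑ j, g (a i) * g (a j)) := by
        unfold weightedVar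
        rw [hmean]
        simp only [sq, ← hcenter, Finset.sum_mul_sum]
        rfl
    _ = M * weightedVar w f := by
        simp [weightedMean_sum, hpair]

end ProductWeights

lemma le_of_le_mul_add_pow {v : ℕ → ℝ} {q r c : ℝ} (hq : 0 ≤ q) (hrq : r < q)
    (h0 : v 0 ≤ 0) (hrec : ∀ n, v (n + 1) ≤ q * v n + c * r ^ n) (n : ℕ) :
    v n ≤ c * (q ^ n - r ^ n) / (q - r) := by
  have hqr : 0 < q - r := sub_pos.2 hrq
  induction n with
  | zero => simpa using h0
  | succ n ih =>
    calc v (n + 1) ≤ q * (c * (q ^ n - r ^ n) / (q - r)) + c * r ^ n :=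
          (hrec n).trans (by gcongr)
      _ = c * (q ^ (n + 1) - r ^ (n + 1)) / (q - r) := by
          field_simp
          ring

lemma prod_one_add_div_two_pow_le_exp {K : ℝ} (hK : 0 ≤ K) (n : ℕ) :
    ∏ k ∈ Finset.range n, (1 + K / 2 ^ (k + 1)) ≤ Real.exp K :=
  calc ∏ k ∈ Finset.range n, (1 + K / 2 ^ (k + 1))
      ≤ ∏ k ∈ Finset.range n, Real.exp (K / 2 ^ (k + 1)) :=
        Finset.prod_le_prod (fun k _ => by positivity)
          (fun k _ => by linarith [Real.add_one_le_exp (K / 2 ^ (k + 1))])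
    _ = Real.exp (∑ k ∈ Finset.range n, K / 2 * (1 / 2) ^ k) := by
        rw [Real.exp_sum]
        refine Finset.prod_congr rfl fun k _ => ?_
        rw [pow_succ, one_div_pow, div_mul_div_comm, mul_one, mul_comm]
    _ ≤ Real.exp K := by
        rw [Real.exp_le_exp, ← Finset.mul_sum]
        nlinarith [sum_geometric_two_le n]

section Cascade

variable {A B : Type*} (m : ℕ → ℕ) (ρ₀ : A → List B)
  (t : (n : ℕ) → Alph A m (n + 1) → List B)

lemma casc_length_succ (n : ℕ) (a : Alph A m (n + 1)) :
    ((casc m ρ₀ t (n + 1) a).length : ℝ)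
      = ∑ i, ((casc m ρ₀ t n (a i)).length : ℝ) + (t n a).length := by
  simp [casc, List.length_flatten, List.sum_ofFn]

lemma pvec_succ (p : A → ℝ) (n : ℕ) (a : Alph A m (n + 1)) :
    pvec m p (n + 1) a = ∏ i, pvec m p n (a i) := by
  simp [pvec, spell0, List.map_flatten, List.prod_flatten, List.prod_ofFn]

lemma isProbVector_pvec [Fintype A] {p : A → ℝ} (hp : IsProbVector p) (n : ℕ) :
    IsProbVector (pvec m p n) := by
  induction n with
  | zero =>
    have h0 : pvec m p 0 = p := funext fun a => List.prod_singleton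
    rw [h0]
    exact hp
  | succ n ih =>
    refine ⟨fun a => ?_, ?_⟩
    · rw [pvec_succ]
      exact Finset.prod_nonneg fun i _ => ih.1 (a i)
    · calc ∑ a, pvec m p (n + 1) a = ∑ a : Fin (m n) → Alph A m n, ∏ i, pvec m p n (a i) :=
            Finset.sum_congr rfl fun a _ => pvec_succ m p n a
        _ = ∏ _i : Fin (m n), ∑ x, pvec m p n x := (Fintype.prod_sum _).symm
        _ = 1 := by simp [ih.2]

def untailedLength (ℓ : ℕ) (m : ℕ → ℕ) (n : ℕ) : ℕ :=
  ℓ * ∏ k ∈ Finset.range n, m k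

lemma untailedLength_succ (ℓ n : ℕ) :
    untailedLength ℓ m (n + 1) = untailedLength ℓ m n * m n := by
  simp [untailedLength, Finset.prod_range_succ, mul_assoc]

lemma untailedLength_pos {ℓ : ℕ} (hℓ : 0 < ℓ) (hm : ∀ n, 0 < m n) (n : ℕ) :
    0 < untailedLength ℓ m n :=
  Nat.mul_pos hℓ (Finset.prod_pos fun k _ => hm k)

variable {m ρ₀ t} {ℓ : ℕ}

lemma untailedLength_le_length (hρ : ∀ a, (ρ₀ a).length = ℓ) (n : ℕ) (a : Alph A m n) :
    (untailedLength ℓ m n : ℝ) ≤ (casc m ρ₀ t n a).length := by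
  induction n with
  | zero => simp [untailedLength, casc, hρ a]
  | succ n ih =>
    rw [untailedLength_succ, casc_length_succ]
    calc ((untailedLength ℓ m n * m n : ℕ) : ℝ)
        = ∑ _i : Fin (m n), (untailedLength ℓ m n : ℝ) := by simp [mul_comm]
      _ ≤ ∑ i, ((casc m ρ₀ t n (a i)).length : ℝ) := Finset.sum_le_sum fun i _ => ih (a i)
      _ ≤ _ := le_add_of_nonneg_right (Nat.cast_nonneg _)

lemma length_le_prod_mul_untailedLength {K : ℝ} (hK : 0 ≤ K)
    (hρ : ∀ a, (ρ₀ a).length = ℓ) (hctrl : TailControlled m ρ₀ t K) (n : ℕ) (a : Alph A m n) :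
    ((casc m ρ₀ t n a).length : ℝ)
      ≤ (∏ k ∈ Finset.range n, (1 + K / 2 ^ (k + 1))) * untailedLength ℓ m n := by
  induction n with
  | zero => simp [untailedLength, casc, hρ a]
  | succ n ih =>
    set P := ∏ k ∈ Finset.range n, (1 + K / 2 ^ (k + 1))
    have hsum : ∑ i, ((casc m ρ₀ t n (a i)).length : ℝ) ≤ m n * (P * untailedLength ℓ m n) :=
      calc ∑ i, ((casc m ρ₀ t n (a i)).length : ℝ)
          ≤ ∑ _i : Fin (m n), P * untailedLength ℓ m n := Finset.sum_le_sum fun i _ => ih (a i)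
        _ = m n * (P * untailedLength ℓ m n) := by simp
    calc ((casc m ρ₀ t (n + 1) a).length : ℝ)
        ≤ (1 + K / 2 ^ (n + 1)) * ∑ i, ((casc m ρ₀ t n (a i)).length : ℝ) := by
          rw [casc_length_succ]; linarith [hctrl.2 n a]
      _ ≤ (1 + K / 2 ^ (n + 1)) * (m n * (P * untailedLength ℓ m n)) := by gcongr
      _ = (∏ k ∈ Finset.range (n + 1), (1 + K / 2 ^ (k + 1)))
            * untailedLength ℓ m (n + 1) := by
          rw [Finset.prod_range_succ, untailedLength_succ]; push_cast; ring

lemma length_le_exp_mul_untailedLength {K : ℝ} (hK : 0 ≤ K)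
    (hρ : ∀ a, (ρ₀ a).length = ℓ) (hctrl : TailControlled m ρ₀ t K) (n : ℕ) (a : Alph A m n) :
    ((casc m ρ₀ t n a).length : ℝ) ≤ Real.exp K * untailedLength ℓ m n :=
  (length_le_prod_mul_untailedLength hK hρ hctrl n a).trans
    (mul_le_mul_of_nonneg_right (prod_one_add_div_two_pow_le_exp hK n) (by positivity))

lemma tail_length_le {K : ℝ} (hK : 0 ≤ K) (hρ : ∀ a, (ρ₀ a).length = ℓ)
    (hctrl : TailControlled m ρ₀ t K) (n : ℕ) (a : Alph A m (n + 1)) :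
    ((t n a).length : ℝ) ≤ K * Real.exp K / 2 ^ (n + 1) * untailedLength ℓ m (n + 1) :=
  calc ((t n a).length : ℝ)
      ≤ K / 2 ^ (n + 1) * ∑ i, ((casc m ρ₀ t n (a i)).length : ℝ) := hctrl.2 n a
    _ ≤ K / 2 ^ (n + 1) * ∑ _i : Fin (m n), Real.exp K * untailedLength ℓ m n := by
        gcongr with i
        exact length_le_exp_mul_untailedLength hK hρ hctrl n (a i)
    _ = K * Real.exp K / 2 ^ (n + 1) * untailedLength ℓ m (n + 1) := by
        rw [untailedLength_succ, Finset.sum_const, Finset.card_univ, Fintype.card_fin, nsmul_eq_mul]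
        push_cast
        ring

lemma weightedVar_length_succ_le [Fintype A] {p : A → ℝ} (hp : IsProbVector p) (n : ℕ)
    {τ : ℝ} (hτ : ∀ a : Alph A m (n + 1), ((t n a).length : ℝ) ≤ τ) :
    weightedVar (pvec m p (n + 1)) (fun a => ((casc m ρ₀ t (n + 1) a).length : ℝ))
      ≤ 3 / 2 * m n * weightedVar (pvec m p n) (fun a => ((casc m ρ₀ t n a).length : ℝ))
        + 3 * τ ^ 2 := by
  have hp' := isProbVector_pvec m hp (n + 1)
  have hsplit : (fun a : Alph A m (n + 1) => ((casc m ρ₀ t (n + 1) a).length : ℝ))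
      = (fun a => ∑ i, ((casc m ρ₀ t n (a i)).length : ℝ))
        + (fun a => ((t n a).length : ℝ)) :=
    funext (casc_length_succ m ρ₀ t n)
  have hblocks :
      weightedVar (pvec m p (n + 1)) (fun a => ∑ i, ((casc m ρ₀ t n (a i)).length : ℝ))
        = m n * weightedVar (pvec m p n) (fun a => ((casc m ρ₀ t n a).length : ℝ)) := by
    have h := weightedVar_pi_sum (M := m n) (w := pvec m p n) (isProbVector_pvec m hp n).2
      (fun a => ((casc m ρ₀ t n a).length : ℝ))
    rw [← h, funext (pvec_succ m p n)]
    rfl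
  have htails : weightedVar (pvec m p (n + 1)) (fun a => ((t n a).length : ℝ)) ≤ τ ^ 2 :=
    weightedVar_le_sq hp'.1 hp'.2 fun a => by rw [abs_of_nonneg (Nat.cast_nonneg _)]; exact hτ a
  calc _ ≤ 3 / 2 * weightedVar (pvec m p (n + 1))
          (fun a => ∑ i, ((casc m ρ₀ t n (a i)).length : ℝ))
        + 3 * weightedVar (pvec m p (n + 1)) (fun a => ((t n a).length : ℝ)) := by
        rw [hsplit]; exact weightedVar_add_le hp'.1 _ _
    _ ≤ _ := by rw [hblocks]; linarith

lemma weightedVar_length_div_sq_succ_le [Fintype A] {p : A → ℝ} (hp : IsProbVector p) {K : ℝ}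
    (hK : 0 ≤ K) (hm : ∀ n, 2 ≤ m n) (hℓ : 0 < ℓ) (hρ : ∀ a, (ρ₀ a).length = ℓ)
    (hctrl : TailControlled m ρ₀ t K) (n : ℕ) :
    weightedVar (pvec m p (n + 1)) (fun a => ((casc m ρ₀ t (n + 1) a).length : ℝ))
        / (untailedLength ℓ m (n + 1) : ℝ) ^ 2
      ≤ 3 / 4 * (weightedVar (pvec m p n) (fun a => ((casc m ρ₀ t n a).length : ℝ))
        / (untailedLength ℓ m n : ℝ) ^ 2) + 3 / 4 * (K * Real.exp K) ^ 2 * (1 / 4) ^ n := by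
  have hN : (0 : ℝ) < untailedLength ℓ m n := by
    exact_mod_cast untailedLength_pos m hℓ (fun k => two_pos.trans_le (hm k)) n
  set V := weightedVar (pvec m p n) (fun a => ((casc m ρ₀ t n a).length : ℝ))
  set N := (untailedLength ℓ m n : ℝ)
  have hV : 0 ≤ V := weightedVar_nonneg (isProbVector_pvec m hp n).1 _
  have hmn : (2 : ℝ) ≤ m n := by exact_mod_cast hm n
  have hstep := weightedVar_length_succ_le (ρ₀ := ρ₀) hp n (tail_length_le hK hρ hctrl n)
  have h4 : (1 / 4 : ℝ) ^ n = 1 / (2 ^ n) ^ 2 := by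
    rw [div_pow, one_pow, ← pow_mul, mul_comm, pow_mul]; norm_num
  rw [untailedLength_succ, Nat.cast_mul] at hstep ⊢
  rw [div_le_iff₀ (by positivity)]
  calc _ ≤ 3 / 2 * m n * V + 3 * (K * Real.exp K / 2 ^ (n + 1) * (N * m n)) ^ 2 := hstep
    _ ≤ 3 / 4 * m n * m n * V + 3 * (K * Real.exp K / 2 ^ (n + 1) * (N * m n)) ^ 2 := by
        nlinarith [mul_nonneg hV (sub_nonneg.2 hmn)]
    _ = (3 / 4 * (V / N ^ 2) + 3 / 4 * (K * Real.exp K) ^ 2 * (1 / 4) ^ n) * (N * m n) ^ 2 := by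
        rw [h4, pow_succ]
        field_simp
        ring

lemma weightedVar_length_div_sq_le [Fintype A] {p : A → ℝ} (hp : IsProbVector p) {K : ℝ}
    (hK : 0 ≤ K) (hm : ∀ n, 2 ≤ m n) (hℓ : 0 < ℓ) (hρ : ∀ a, (ρ₀ a).length = ℓ)
    (hctrl : TailControlled m ρ₀ t K) (n : ℕ) :
    weightedVar (pvec m p n) (fun a => ((casc m ρ₀ t n a).length : ℝ))
        / (untailedLength ℓ m n : ℝ) ^ 2 ≤ 3 / 2 * (K * Real.exp K) ^ 2 * (3 / 4) ^ n := by
  set c := 3 / 4 * (K * Real.exp K) ^ 2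
  have hconst : (fun a => ((casc m ρ₀ t 0 a).length : ℝ)) = fun _ => (ℓ : ℝ) :=
    funext fun a => by simp [casc, hρ a]
  have hv0 : weightedVar (pvec m p 0) (fun a => ((casc m ρ₀ t 0 a).length : ℝ))
      / (untailedLength ℓ m 0 : ℝ) ^ 2 ≤ 0 := by
    simp [hconst, weightedVar_const (isProbVector_pvec m hp 0).2]
  calc _ ≤ c * ((3 / 4) ^ n - (1 / 4) ^ n) / (3 / 4 - 1 / 4) :=
        le_of_le_mul_add_pow (v := fun k => weightedVar (pvec m p k)
          (fun a => ((casc m ρ₀ t k a).length : ℝ)) / (untailedLength ℓ m k : ℝ) ^ 2)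
          (by norm_num) (by norm_num) hv0
          (weightedVar_length_div_sq_succ_le hp hK hm hℓ hρ hctrl) n
    _ = 3 / 2 * (K * Real.exp K) ^ 2 * (3 / 4) ^ n - 2 * c * (1 / 4) ^ n := by ring
    _ ≤ 3 / 2 * (K * Real.exp K) ^ 2 * (3 / 4) ^ n := by
        have : 0 ≤ c * (1 / 4) ^ n := by positivity
        linarith

lemma sq_sum_abs_ptilde_sub_pvec_le [Fintype A] {p : A → ℝ} (hp : IsProbVector p)
    (hm : ∀ n, 0 < m n) (hℓ : 0 < ℓ) (hρ : ∀ a, (ρ₀ a).length = ℓ) (n : ℕ) :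
    (∑ a, |ptilde m ρ₀ t p n a - pvec m p n a|) ^ 2
      ≤ weightedVar (pvec m p n) (fun a => ((casc m ρ₀ t n a).length : ℝ))
        / (untailedLength ℓ m n : ℝ) ^ 2 := by
  have hp' := isProbVector_pvec m hp n
  have hN : (0 : ℝ) < untailedLength ℓ m n := by exact_mod_cast untailedLength_pos m hℓ hm n
  have hS := le_weightedMean hp'.1 hp'.2 (untailedLength_le_length (t := t) hρ n)
  calc _ ≤ weightedVar (pvec m p n) (fun a => ((casc m ρ₀ t n a).length : ℝ))
        / weightedMean (pvec m p n) (fun a => ((casc m ρ₀ t n a).length : ℝ)) ^ 2 :=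
        sq_sum_abs_reweight_sub_le hp'.1 hp'.2 (hN.trans_le hS)
    _ ≤ _ := div_le_div_of_nonneg_left (weightedVar_nonneg hp'.1 _) (by positivity)
        (pow_le_pow_left₀ hN.le hS 2)

end Cascade

/-- Under the control-of-tail-lengths assumption, for every `ε > 0` there
is `n₀` (independent of the Bernoulli measure) such that for every probability vector `p`
on `A` and every `n > n₀`, the probability vectors of `p̃_n` and `p_n` satisfy
`D_{A_n}(p̃_n, p_n) < ε`. -/
theorem ptilde_close_to_pvec
    {A B : Type*} [Fintype A]
    (m : ℕ → ℕ) (hm : ∀ n, 2 ≤ m n)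
    (ρ₀ : A → List B) (t : (n : ℕ) → Alph A m (n + 1) → List B)
    (K : ℝ) (hK : 0 < K) (hctrl : TailControlled m ρ₀ t K)
    (ε : ℝ) (hε : 0 < ε) :
    ∃ n₀ : ℕ, ∀ (p : A → ℝ), IsProbVector p → ∀ n : ℕ, n₀ < n →
      ∑ a : Alph A m n, |ptilde m ρ₀ t p n a - pvec m p n a| < ε := by
  obtain ⟨ℓ, hℓ, hρ⟩ := hctrl.1
  have hdecay :
      Tendsto (fun n => 3 / 2 * (K * Real.exp K) ^ 2 * (3 / 4 : ℝ) ^ n) atTop (𝓝 0) := by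
    simpa using (tendsto_pow_atTop_nhds_zero_of_lt_one (r := (3 / 4 : ℝ)) (by norm_num)
      (by norm_num)).const_mul (3 / 2 * (K * Real.exp K) ^ 2)
  obtain ⟨n₀, hn₀⟩ := eventually_atTop.1 (hdecay.eventually (gt_mem_nhds (pow_pos hε 2)))
  refine ⟨n₀, fun p hp n hn => lt_of_pow_lt_pow_left₀ 2 hε.le ?_⟩
  calc (∑ a, |ptilde m ρ₀ t p n a - pvec m p n a|) ^ 2
      ≤ weightedVar (pvec m p n) (fun a => ((casc m ρ₀ t n a).length : ℝ))
        / (untailedLength ℓ m n : ℝ) ^ 2 :=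
        sq_sum_abs_ptilde_sub_pvec_le hp (fun k => two_pos.trans_le (hm k)) hℓ hρ n
    _ ≤ 3 / 2 * (K * Real.exp K) ^ 2 * (3 / 4) ^ n :=
        weightedVar_length_div_sq_le hp hK.le hm hℓ hρ hctrl n
    _ < ε ^ 2 := hn₀ n hn.le

end LBPaper
end
end
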